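/- Let a, b, z be complex numbers with |z| < 1 and let m be a natural number. Then the entire-in-c extension of ₂F₁/Γ evaluated at c = −m satisfies: ∑_{k=0}^∞ (a)_k (b)_k z^k / (Γ(−m+k) · k!) = ((a)_{m+1} (b)_{m+1} z^{m+1} / (m+1)!) · ₂F₁(a+m+1, b+m+1; m+2; z). (Note that 1/Γ(−m+k) = 0 for 0 ≤ k ≤ m, so the left-hand sum effectively starts at k = m+1.) -/

import Mathlib

open Complex

/-! Since `1/Γ` vanishes at `0, -1, …, -m`, the first `m + 1` terms of the series drop out.
Reindexing by `k = m + 1 + n`, one has `Γ(n + 1) = n!`, and splitting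
`(x)_{m+1+n} = (x)_{m+1} (x + m + 1)_n` together with `(m+1)! (m+2)_n = (m+1+n)!`
turns each remaining term into the corresponding term of the right-hand side. -/

/-- The Gaussian hypergeometric function `₂F₁(a, b; c; z)`, defined by its power series. -/
noncomputable def hyp2F1 (a b c z : ℂ) : ℂ :=
  ∑' m : ℕ, ((ascPochhammer ℂ m).eval a * (ascPochhammer ℂ m).eval b /
    ((ascPochhammer ℂ m).eval c * (m.factorial : ℂ))) * z ^ m

theorem tsum_eq_tsum_nat_add_of_eq_zero {α : Type*} [AddCommMonoid α] [TopologicalSpace α]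
    {f : ℕ → α} {N : ℕ} (hf : ∀ k < N, f k = 0) : ∑' k, f k = ∑' n, f (N + n) := by
  refine ((add_right_injective N).tsum_eq fun k hk => ?_).symm
  have hNk : N ≤ k := not_lt.mp fun h => hk (hf k h)
  exact ⟨k - N, Nat.add_sub_cancel' hNk⟩

theorem ascPochhammer_eval_add {S : Type*} [CommSemiring S] (x : S) (m n : ℕ) :
    (ascPochhammer S (m + n)).eval x
      = (ascPochhammer S m).eval x * (ascPochhammer S n).eval (x + m) := by
  rw [← ascPochhammer_mul, Polynomial.eval_mul, Polynomial.eval_comp, Polynomial.eval_add,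
    Polynomial.eval_X, Polynomial.eval_natCast]

theorem Complex.inv_Gamma_neg_natCast_add_of_le {m k : ℕ} (hk : k ≤ m) :
    (Gamma (-(m : ℂ) + k))⁻¹ = 0 := by
  have hneg : -(m : ℂ) + k = -((m - k : ℕ) : ℂ) := by push_cast [Nat.cast_sub hk]; ring
  rw [hneg, Gamma_neg_nat_eq_zero, inv_zero]

theorem Complex.Gamma_neg_natCast_add_natCast_add_one (m n : ℕ) :
    Gamma (-(m : ℂ) + ((m + 1 + n : ℕ) : ℂ)) = n.factorial := by
  rw [← Gamma_nat_eq_factorial]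
  congr 1
  push_cast
  ring

theorem hyp2F1_neg_int_c_limit_general (a b z : ℂ) (m : ℕ) :
    (∑' k : ℕ, (ascPochhammer ℂ k).eval a * (ascPochhammer ℂ k).eval b * z ^ k
        * (Complex.Gamma (-(m : ℂ) + k))⁻¹ / (k.factorial : ℂ))
      = (ascPochhammer ℂ (m + 1)).eval a * (ascPochhammer ℂ (m + 1)).eval b * z ^ (m + 1)
          / ((m + 1).factorial : ℂ)
        * hyp2F1 (a + m + 1) (b + m + 1) ((m : ℂ) + 2) z := by
  rw [tsum_eq_tsum_nat_add_of_eq_zero (N := m + 1) fun k hk => by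
      rw [inv_Gamma_neg_natCast_add_of_le (Nat.lt_succ_iff.mp hk), mul_zero, zero_div],
    hyp2F1, ← tsum_mul_left]
  refine tsum_congr fun n => ?_
  have hsplit (x : ℂ) : (ascPochhammer ℂ (m + 1 + n)).eval x
      = (ascPochhammer ℂ (m + 1)).eval x * (ascPochhammer ℂ n).eval (x + m + 1) := by
    rw [ascPochhammer_eval_add, Nat.cast_add_one, ← add_assoc]
  have hpoch : (ascPochhammer ℂ n).eval ((m : ℂ) + 2)
      = ((m + 1 + n).factorial : ℂ) / ((m + 1).factorial : ℂ) := by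
    rw [← factorial_mul_ascPochhammer, Nat.cast_add_one, add_assoc, one_add_one_eq_two,
      mul_div_cancel_left₀ _ (Nat.cast_ne_zero.mpr (Nat.factorial_ne_zero _))]
  rw [Gamma_neg_natCast_add_natCast_add_one, hsplit a, hsplit b, hpoch, pow_add]
  field_simp [Nat.factorial_ne_zero]

theorem hyp2F1_neg_int_c_limit (a b z : ℂ) (hz : ‖z‖ < 1) (m : ℕ) :
    (∑' k : ℕ, (ascPochhammer ℂ k).eval a * (ascPochhammer ℂ k).eval b * z ^ k
        * (Complex.Gamma (-(m : ℂ) + k))⁻¹ / (k.factorial : ℂ))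
      = (ascPochhammer ℂ (m + 1)).eval a * (ascPochhammer ℂ (m + 1)).eval b * z ^ (m + 1)
          / ((m + 1).factorial : ℂ)
        * hyp2F1 (a + m + 1) (b + m + 1) ((m : ℂ) + 2) z :=
  hyp2F1_neg_int_c_limit_general a b z m
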